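/- Let P, Q ⊆ nA* be joinless codes and define the elementwise join P ∨ Q = {p ∨ q : p ∈ P, q ∈ Q, and p ∨ q exists}. Then: (1) P ∨ Q is a joinless code, and hence (when P, Q are finite) |P ∨ Q| ≤ |P|·|Q|; (2) P and Q are both maximal joinless codes iff P ∨ Q is a maximal joinless code; (3) (P ∨ Q)·(nA*) = P·(nA*) ∩ Q·(nA*). -/

import Mathlib

/-!
Two tuples have a join exactly when they have a common upper bound, and the join is then the
coordinatewise longer word. Hence an upper bound of two elements of `P ∨ Q` bounds the
underlying elements of `P` and of `Q`, which must therefore coincide; and `w` lies above some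
`p ∨ q` iff it lies above some `p ∈ P` and some `q ∈ Q`. A joinless code is maximal iff the
right ideal it generates is essential (meets the upper set of every tuple), so maximality of
`P ∨ Q` reduces to the essentiality of `P·nA* ∩ Q·nA*`.
-/

namespace BrinThompson

abbrev W (A : Type*) (n : ℕ) : Type _ := Fin n → List A

variable {A : Type*} {n : ℕ}

/-- Coordinatewise concatenation in `nA*`. -/
def cat (u x : W A n) : W A n := fun i => u i ++ x i

/-- `u ≤_init v` : `u` is an initial factor of `v`. -/
def initLE (u v : W A n) : Prop := ∃ x : W A n, v = cat u x

/-- `w` is the join (least upper bound) of `u` and `v` w.r.t. `≤_init`. -/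
def isJoin (u v w : W A n) : Prop :=
  initLE u w ∧ initLE v w ∧ ∀ z : W A n, initLE u z → initLE v z → initLE w z

/-- `u` and `v` have a join. -/
def HasJoin (u v : W A n) : Prop := ∃ w : W A n, isJoin u v w

/-- A joinless code: no two distinct elements have a join. -/
def JoinlessCode (S : Set (W A n)) : Prop :=
  ∀ u ∈ S, ∀ v ∈ S, u ≠ v → ¬ HasJoin u v

/-- A maximal joinless code: joinless, and every element of `nA*` has a join
with some element of the code. -/
def MaxJoinlessCode (S : Set (W A n)) : Prop :=
  JoinlessCode S ∧ ∀ x : W A n, ∃ p ∈ S, HasJoin x p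

/-- The right ideal `C · nA*` generated by `C`. -/
def genIdeal (C : Set (W A n)) : Set (W A n) := {w | ∃ c ∈ C, ∃ x : W A n, w = cat c x}

def IsRightIdeal (R : Set (W A n)) : Prop := genIdeal R = R

/-- An initial factor code: pairwise `≤_init`-incomparable set. -/
def InitFactorCode (S : Set (W A n)) : Prop :=
  ∀ u ∈ S, ∀ v ∈ S, initLE u v → u = v

/-- `A_{ε,n}`: tuples with one coordinate a single letter and the rest empty. -/
def Aeps (A : Type*) (n : ℕ) : Set (W A n) :=
  {w | ∃ i : Fin n, ∃ a : A, w i = [a] ∧ ∀ j : Fin n, j ≠ i → w j = []}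

/-- `(ε)^n`, the tuple of empty strings. -/
def epsn (A : Type*) (n : ℕ) : W A n := fun _ => []

/-- `nA^ω`: `n`-tuples of one-sided infinite sequences over `A`. -/
abbrev Winf (A : Type*) (n : ℕ) : Type _ := Fin n → ℕ → A

/-- Concatenation of a finite tuple `p ∈ nA*` with an infinite tuple `u ∈ nA^ω`. -/
def catInf (p : W A n) (u : Winf A n) : Winf A n :=
  fun i k => if h : k < (p i).length then (p i).get ⟨k, h⟩ else u i (k - (p i).length)

/-- `v` is an interior vertex of the `P`-dag: a strict initial factor of
some element of `P`. -/
def Interior (P : Set (W A n)) (v : W A n) : Prop := ∃ p ∈ P, initLE v p ∧ v ≠ p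

/-- The child of `v` in direction `i`, extended by letter `a`. -/
def child (v : W A n) (i : Fin n) (a : A) : W A n := Function.update v i (v i ++ [a])

/-- A leaf of the interior dag of `P`: an interior vertex none of whose
children is interior. -/
def InteriorLeaf (P : Set (W A n)) (v : W A n) : Prop :=
  Interior P v ∧ ∀ (i : Fin n) (a : A), ¬ Interior P (child v i a)

/-- `v_+ = (v · A_{ε,n}) ∩ P`, the set of children of `v` belonging to `P`. -/
def vplus (P : Set (W A n)) (v : W A n) : Set (W A n) :=
  {w | (∃ (i : Fin n) (a : A), w = child v i a) ∧ w ∈ P}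

/-- The depth of a vertex: the sum of the coordinate lengths. -/
def depth (v : W A n) : ℕ := ∑ i, (v i).length

/-- One-step restriction of `P` at `(p, i)`. -/
def oneStep (P : Set (W A n)) (p : W A n) (i : Fin n) : Set (W A n) :=
  (P \ {p}) ∪ {w | ∃ a : A, w = child p i a}

/-- One step in a sequence of one-step restrictions. -/
def RestrStep (P Q : Set (W A n)) : Prop := ∃ p ∈ P, ∃ i : Fin n, Q = oneStep P p i

/-- The box code `A^{k_1} × … × A^{k_n}`. -/
def box (A : Type*) {n : ℕ} (k : Fin n → ℕ) : Set (W A n) :=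
  {w | ∀ i : Fin n, (w i).length = k i}

/-- Elementwise join `P ∨ Q` of two sets, ranging over the joins that exist. -/
def setJoin (P Q : Set (W A n)) : Set (W A n) :=
  {w | ∃ p ∈ P, ∃ q ∈ Q, isJoin p q w}

/-- `ℓ(S)`: the maximum coordinate length occurring in `S`. -/
noncomputable def ell (S : Set (W A n)) : ℕ :=
  sSup {m | ∃ z ∈ S, ∃ i : Fin n, (z i).length = m}

/-- An element of `n RI^fin_A`: an injective right ideal morphism of `nA*`
whose domain code and image code are finite maximal joinless codes.
`toFun` is a total function whose values outside `Dom` are irrelevant. -/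
structure RIMfin (A : Type*) (n : ℕ) where
  Dom : Set (W A n)
  toFun : W A n → W A n
  domC : Set (W A n)
  imC : Set (W A n)
  ideal : IsRightIdeal Dom
  morph : ∀ x ∈ Dom, ∀ w : W A n, toFun (cat x w) = cat (toFun x) w
  inj : Set.InjOn toFun Dom
  domC_gen : genIdeal domC = Dom
  imC_gen : genIdeal imC = toFun '' Dom
  domC_fin : domC.Finite
  domC_max : MaxJoinlessCode domC
  imC_fin : imC.Finite
  imC_max : MaxJoinlessCode imC

/-- `ℓ(f) = max{ℓ(z) : z ∈ domC(f) ∪ imC(f)}`. -/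
noncomputable def ellF (F : RIMfin A n) : ℕ := ell (F.domC ∪ F.imC)

/-- `G` extends `F` (as partial functions). -/
def Extends (F G : RIMfin A n) : Prop :=
  F.Dom ⊆ G.Dom ∧ ∀ x ∈ F.Dom, G.toFun x = F.toFun x

/-- `F` and `G` are equal as partial functions. -/
def EquivRIM (F G : RIMfin A n) : Prop :=
  F.Dom = G.Dom ∧ ∀ x ∈ F.Dom, F.toFun x = G.toFun x

/-- `G` is a maximal extension of `F` in `n RI^fin_A`. -/
def MaxExtension (F G : RIMfin A n) : Prop :=
  Extends F G ∧ ∀ H : RIMfin A n, Extends G H → EquivRIM G H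

theorem initLE_iff {u v : W A n} : initLE u v ↔ ∀ i, u i <+: v i := by
  constructor
  · rintro ⟨x, rfl⟩ i
    exact ⟨x i, rfl⟩
  · intro h
    refine ⟨fun i => (v i).drop (u i).length, funext fun i => ?_⟩
    obtain ⟨t, ht⟩ := h i
    simp [cat, ← ht]

theorem initLE_trans {u v w : W A n} (huv : initLE u v) (hvw : initLE v w) : initLE u w :=
  initLE_iff.2 fun i => (initLE_iff.1 huv i).trans (initLE_iff.1 hvw i)

theorem initLE_antisymm {u v : W A n} (huv : initLE u v) (hvu : initLE v u) : u = v :=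
  funext fun i => (initLE_iff.1 huv i).eq_of_length
    (le_antisymm (initLE_iff.1 huv i).length_le (initLE_iff.1 hvu i).length_le)

def joinW (u v : W A n) : W A n :=
  fun i => if (u i).length ≤ (v i).length then v i else u i

theorem isJoin_joinW {u v z : W A n} (huz : initLE u z) (hvz : initLE v z) :
    isJoin u v (joinW u v) := by
  refine ⟨initLE_iff.2 fun i => ?_, initLE_iff.2 fun i => ?_,
    fun z' hu hv => initLE_iff.2 fun i => ?_⟩ <;> unfold joinW <;> split_ifs with h
  · exact List.prefix_of_prefix_length_le (initLE_iff.1 huz i) (initLE_iff.1 hvz i) h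
  · exact List.prefix_refl _
  · exact List.prefix_refl _
  · exact List.prefix_of_prefix_length_le (initLE_iff.1 hvz i) (initLE_iff.1 huz i) (by omega)
  · exact initLE_iff.1 hv i
  · exact initLE_iff.1 hu i

theorem hasJoin_iff {u v : W A n} : HasJoin u v ↔ ∃ z, initLE u z ∧ initLE v z :=
  ⟨fun ⟨w, hw⟩ => ⟨w, hw.1, hw.2.1⟩, fun ⟨_, huz, hvz⟩ => ⟨_, isJoin_joinW huz hvz⟩⟩

theorem isJoin_unique {u v w w' : W A n} (hw : isJoin u v w) (hw' : isJoin u v w') : w = w' :=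
  initLE_antisymm (hw.2.2 w' hw'.1 hw'.2.1) (hw'.2.2 w hw.1 hw.2.1)

theorem isJoin.eq_joinW {u v w : W A n} (hw : isJoin u v w) : w = joinW u v :=
  isJoin_unique hw (isJoin_joinW hw.1 hw.2.1)

theorem JoinlessCode.eq_of_initLE {S : Set (W A n)} (hS : JoinlessCode S) {u v z : W A n}
    (hu : u ∈ S) (hv : v ∈ S) (huz : initLE u z) (hvz : initLE v z) : u = v := by
  by_contra hne
  exact hS u hu v hv hne (hasJoin_iff.2 ⟨z, huz, hvz⟩)

theorem joinlessCode_setJoin {P Q : Set (W A n)} (hP : JoinlessCode P) (hQ : JoinlessCode Q) :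
    JoinlessCode (setJoin P Q) := by
  rintro w₁ ⟨p₁, hp₁, q₁, hq₁, hw₁⟩ w₂ ⟨p₂, hp₂, q₂, hq₂, hw₂⟩ hne hjoin
  obtain ⟨z, hw₁z, hw₂z⟩ := hasJoin_iff.1 hjoin
  obtain rfl := hP.eq_of_initLE hp₁ hp₂ (initLE_trans hw₁.1 hw₁z) (initLE_trans hw₂.1 hw₂z)
  obtain rfl := hQ.eq_of_initLE hq₁ hq₂ (initLE_trans hw₁.2.1 hw₁z) (initLE_trans hw₂.2.1 hw₂z)
  exact hne (isJoin_unique hw₁ hw₂)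

theorem setJoin_subset_image_joinW (P Q : Set (W A n)) :
    setJoin P Q ⊆ (fun pq : W A n × W A n => joinW pq.1 pq.2) '' (P ×ˢ Q) := by
  rintro w ⟨p, hp, q, hq, hw⟩
  exact ⟨(p, q), ⟨hp, hq⟩, hw.eq_joinW.symm⟩

theorem ncard_setJoin_le {P Q : Set (W A n)} (hP : P.Finite) (hQ : Q.Finite) :
    (setJoin P Q).ncard ≤ P.ncard * Q.ncard :=
  calc (setJoin P Q).ncard
      ≤ ((fun pq : W A n × W A n => joinW pq.1 pq.2) '' (P ×ˢ Q)).ncard :=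
        Set.ncard_le_ncard (setJoin_subset_image_joinW P Q) ((hP.prod hQ).image _)
    _ ≤ (P ×ˢ Q).ncard := Set.ncard_image_le (hP.prod hQ)
    _ = P.ncard * Q.ncard := Set.ncard_prod

theorem mem_genIdeal {C : Set (W A n)} {w : W A n} :
    w ∈ genIdeal C ↔ ∃ c ∈ C, initLE c w := by
  simp [genIdeal, initLE]

theorem mem_genIdeal_of_initLE {C : Set (W A n)} {w z : W A n} (hw : w ∈ genIdeal C)
    (hwz : initLE w z) : z ∈ genIdeal C := by
  obtain ⟨c, hc, hcw⟩ := mem_genIdeal.1 hw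
  exact mem_genIdeal.2 ⟨c, hc, initLE_trans hcw hwz⟩

theorem genIdeal_setJoin (P Q : Set (W A n)) :
    genIdeal (setJoin P Q) = genIdeal P ∩ genIdeal Q := by
  ext w
  simp only [Set.mem_inter_iff, mem_genIdeal]
  constructor
  · rintro ⟨c, ⟨p, hp, q, hq, hc⟩, hcw⟩
    exact ⟨⟨p, hp, initLE_trans hc.1 hcw⟩, q, hq, initLE_trans hc.2.1 hcw⟩
  · rintro ⟨⟨p, hp, hpw⟩, q, hq, hqw⟩
    have hjoin := isJoin_joinW hpw hqw
    exact ⟨joinW p q, ⟨p, hp, q, hq, hjoin⟩, hjoin.2.2 w hpw hqw⟩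

def IsEssential (R : Set (W A n)) : Prop := ∀ x : W A n, ∃ y ∈ R, initLE x y

theorem IsEssential.mono {R R' : Set (W A n)} (hR : IsEssential R) (hRR' : R ⊆ R') :
    IsEssential R' := fun x =>
  let ⟨y, hy, hxy⟩ := hR x
  ⟨y, hRR' hy, hxy⟩

theorem IsEssential.genIdeal_inter {P Q : Set (W A n)} (hP : IsEssential (genIdeal P))
    (hQ : IsEssential (genIdeal Q)) : IsEssential (genIdeal P ∩ genIdeal Q) := fun x => by
  obtain ⟨y, hyP, hxy⟩ := hP x
  obtain ⟨z, hzQ, hyz⟩ := hQ y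
  exact ⟨z, ⟨mem_genIdeal_of_initLE hyP hyz, hzQ⟩, initLE_trans hxy hyz⟩

theorem maxJoinlessCode_iff {S : Set (W A n)} :
    MaxJoinlessCode S ↔ JoinlessCode S ∧ IsEssential (genIdeal S) := by
  refine and_congr_right fun _ => forall_congr' fun x => ?_
  simp only [hasJoin_iff, mem_genIdeal]
  constructor
  · rintro ⟨p, hp, z, hxz, hpz⟩
    exact ⟨z, ⟨p, hp, hpz⟩, hxz⟩
  · rintro ⟨z, ⟨p, hp, hpz⟩, hxz⟩
    exact ⟨p, hp, z, hxz, hpz⟩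

theorem setJoin_properties_general {A : Type*} {n : ℕ}
    (P Q : Set (W A n))
    (hP : JoinlessCode P) (hQ : JoinlessCode Q) :
    (JoinlessCode (setJoin P Q) ∧
      (P.Finite → Q.Finite → (setJoin P Q).ncard ≤ P.ncard * Q.ncard)) ∧
    ((MaxJoinlessCode P ∧ MaxJoinlessCode Q) ↔ MaxJoinlessCode (setJoin P Q)) ∧
    genIdeal (setJoin P Q) = genIdeal P ∩ genIdeal Q := by
  have hjoinless := joinlessCode_setJoin hP hQ
  refine ⟨⟨hjoinless, ncard_setJoin_le⟩, ?_, genIdeal_setJoin P Q⟩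
  simp only [maxJoinlessCode_iff, genIdeal_setJoin]
  constructor
  · rintro ⟨⟨-, hPess⟩, -, hQess⟩
    exact ⟨hjoinless, hPess.genIdeal_inter hQess⟩
  · rintro ⟨-, hess⟩
    exact ⟨⟨hP, hess.mono Set.inter_subset_left⟩, hQ, hess.mono Set.inter_subset_right⟩

/-- Properties of the elementwise join `P ∨ Q` of joinless codes:
it is joinless (with cardinality at most `|P|·|Q|`), it is maximal iff both
`P` and `Q` are, and it generates `P·nA* ∩ Q·nA*`. -/
theorem setJoin_properties {A : Type*} [Fintype A] [Nonempty A] {n : ℕ}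
    (hn : 1 ≤ n) (P Q : Set (W A n))
    (hP : JoinlessCode P) (hQ : JoinlessCode Q) :
    (JoinlessCode (setJoin P Q) ∧
      (P.Finite → Q.Finite → (setJoin P Q).ncard ≤ P.ncard * Q.ncard)) ∧
    ((MaxJoinlessCode P ∧ MaxJoinlessCode Q) ↔ MaxJoinlessCode (setJoin P Q)) ∧
    genIdeal (setJoin P Q) = genIdeal P ∩ genIdeal Q :=
  setJoin_properties_general P Q hP hQ

end BrinThompson
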